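/- arXiv:2502.21204 — 2 statements merged into one kernel-verified Lean document; each statement's English description precedes it below -/
import Mathlib

section
/- Let T = (V,E) be a tree with |V| > 2. Then the path polytope P_T has dimension |E| − |{u ∈ V : deg(u) = 2}| − 1. -/
open Classical SimpleGraph

noncomputable section

variable {V : Type*}

/-- A leaf: a vertex with exactly one neighbor. -/
def IsLeaf (G : SimpleGraph V) (v : V) : Prop := ∃! w, G.Adj v w

/-- `e` is an edge on the (unique, for trees) path between `i` and `j`. -/
def onPath (G : SimpleGraph V) (i j : V) (e : Sym2 V) : Prop :=
  ∃ p : G.Walk i j, p.IsPath ∧ e ∈ p.edges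

/-- The edge indicator vector `c^{i↔j}` of the path between `i` and `j`. -/
def pathVec (G : SimpleGraph V) (i j : V) : Sym2 V → ℝ :=
  fun e => if onPath G i j e then 1 else 0

/-- The path polytope `P_T`: the convex hull of the indicator vectors of the
paths between pairs of distinct leaves. -/
def pathPolytope (G : SimpleGraph V) : Set (Sym2 V → ℝ) :=
  convexHull ℝ {x | ∃ i j : V, i ≠ j ∧ IsLeaf G i ∧ IsLeaf G j ∧ x = pathVec G i j}

/-- `E_leaf(T)`: edges incident to at least one leaf. -/
def leafEdges (G : SimpleGraph V) : Set (Sym2 V) :=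
  {e | e ∈ G.edgeSet ∧ ∃ v ∈ e, IsLeaf G v}

/-- The dimension of a polytope: the rank of the direction of its affine span. -/
def polyDim {E : Type*} [AddCommGroup E] [Module ℝ E] (P : Set E) : ℕ :=
  Module.finrank ℝ (affineSpan ℝ P).direction

/-!
Root the tree at a leaf `r`. The vectors `c^{v↔r}`, for `v ≠ r` of degree `≠ 2`, span the same
space as the leaf-to-leaf path vectors. Indeed, if `m` is the median of leaves `i, j` and `r`,
then `c^{i↔j} = c^{i↔r} + c^{j↔r} - 2 c^{m↔r}`, and `m` is a leaf, `r`, or has degree `≥ 3`.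
Conversely, a vertex `v` of degree `≥ 3` has leaves `a₁, a₂` in two branches not containing `r`,
and `2 c^{v↔r} = c^{a₁↔r} + c^{a₂↔r} - c^{a₁↔a₂}`. These vectors are linearly independent,
so the linear span of the vertices of `P_T` has dimension `|V| - 1 - #{deg = 2} = |E| - #{deg = 2}`.
The sum of the coordinates at the edges of the leaves is `2` on every vertex of `P_T`, so the
affine hull has one dimension less.
-/

theorem finrank_span_eq_finrank_vectorSpan_add_one {K E : Type*} [DivisionRing K]
    [AddCommGroup E] [Module K E] [Module.Finite K E] {s : Set E} {x : E} (hx : x ∈ s)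
    (f : E →ₗ[K] K) (hf : ∀ y ∈ s, f y = f x) (hfx : f x ≠ 0) :
    Module.finrank K (Submodule.span K s) = Module.finrank K (vectorSpan K s) + 1 := by
  have hker : vectorSpan K s ≤ LinearMap.ker f := by
    rw [vectorSpan_def, Submodule.span_le]
    rintro _ ⟨a, ha, b, hb, rfl⟩
    simp [hf a ha, hf b hb]
  have hspan : Submodule.span K s = vectorSpan K s ⊔ K ∙ x := by
    apply le_antisymm
    · rw [Submodule.span_le]
      intro y hy
      rw [← sub_add_cancel y x]
      exact Submodule.add_mem_sup (vsub_mem_vectorSpan K hy hx)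
        (Submodule.mem_span_singleton_self x)
    · refine sup_le ?_ (Submodule.span_singleton_le_iff_mem _ _ |>.2 (Submodule.subset_span hx))
      rw [vectorSpan_def, Submodule.span_le]
      rintro _ ⟨a, ha, b, hb, rfl⟩
      exact sub_mem (Submodule.subset_span ha) (Submodule.subset_span hb)
  rw [hspan, Submodule.finrank_sup_span_singleton fun h => hfx (hker h)]

section Graph

variable {G : SimpleGraph V}

lemma isLeaf_iff_ncard_neighborSet {v : V} : IsLeaf G v ↔ (G.neighborSet v).ncard = 1 := by
  rw [Set.ncard_eq_one]
  constructor
  · rintro ⟨w, hw, huniq⟩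
    exact ⟨w, Set.eq_singleton_iff_unique_mem.2 ⟨hw, huniq⟩⟩
  · rintro ⟨w, hw⟩
    have hmem : ∀ y, G.Adj v y ↔ y = w := fun y => Set.ext_iff.1 hw y
    exact ⟨w, (hmem w).2 rfl, fun y hy => (hmem y).1 hy⟩

lemma three_le_ncard_neighborSet [Finite V] {v a b c : V} (ha : G.Adj v a) (hb : G.Adj v b)
    (hc : G.Adj v c) (hab : a ≠ b) (hac : a ≠ c) (hbc : b ≠ c) :
    3 ≤ (G.neighborSet v).ncard := by
  rw [← Set.ncard_eq_three.2 ⟨a, b, c, hab, hac, hbc, rfl⟩]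
  refine Set.ncard_le_ncard ?_ (Set.toFinite _)
  rintro x (rfl | rfl | rfl) <;> assumption

lemma exists_adj_ne_of_ncard_neighborSet [Finite V] {v y : V} (hy : G.Adj v y)
    (h1 : (G.neighborSet v).ncard ≠ 1) (h2 : (G.neighborSet v).ncard ≠ 2) :
    ∃ y₁ y₂, G.Adj v y₁ ∧ G.Adj v y₂ ∧ y₁ ≠ y₂ ∧ y₁ ≠ y ∧ y₂ ≠ y := by
  have hpos : 0 < (G.neighborSet v).ncard := (Set.ncard_pos (Set.toFinite _)).2 ⟨y, hy⟩
  have hdiff : 1 < (G.neighborSet v \ {y}).ncard := by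
    rw [Set.ncard_sdiff_singleton_of_mem (s := G.neighborSet v) hy]
    omega
  obtain ⟨y₁, y₂, ⟨hy₁, hy₁y⟩, ⟨hy₂, hy₂y⟩, hne⟩ :=
    (Set.one_lt_ncard_iff (Set.toFinite _)).1 hdiff
  exact ⟨y₁, y₂, hy₁, hy₂, hne, hy₁y, hy₂y⟩

lemma pathVec_comm (a b : V) : pathVec G a b = pathVec G b a := by
  have : ∀ a b e, onPath G a b e → onPath G b a e := fun a b e ⟨p, hp, he⟩ =>
    ⟨p.reverse, hp.reverse, by rwa [Walk.edges_reverse, List.mem_reverse]⟩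
  ext e
  simp only [pathVec, show onPath G a b e ↔ onPath G b a e from ⟨this a b e, this b a e⟩]

lemma pathVec_self (a : V) : pathVec G a a = 0 := by
  ext e
  rw [pathVec, if_neg, Pi.zero_apply]
  rintro ⟨p, hp, he⟩
  rw [Walk.eq_nil_iff_nil.2 (Walk.isPath_iff_nil.1 hp)] at he
  simp at he

def leafPathVecs (G : SimpleGraph V) : Set (Sym2 V → ℝ) :=
  {x | ∃ i j : V, i ≠ j ∧ IsLeaf G i ∧ IsLeaf G j ∧ x = pathVec G i j}

def rootPathVecs (G : SimpleGraph V) (r : V) : Set (Sym2 V → ℝ) :=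
  (pathVec G · r) '' {v | v ≠ r ∧ (G.neighborSet v).ncard ≠ 2}

lemma pathVec_mem_span_leafPathVecs {i j : V} (hi : IsLeaf G i) (hj : IsLeaf G j) :
    pathVec G i j ∈ Submodule.span ℝ (leafPathVecs G) := by
  by_cases hij : i = j
  · rw [hij, pathVec_self]
    exact zero_mem _
  · exact Submodule.subset_span ⟨i, j, hij, hi, hj, rfl⟩

lemma pathVec_mem_span_rootPathVecs_of_ncard_ne_two {v : V} (r : V)
    (hv : (G.neighborSet v).ncard ≠ 2) : pathVec G v r ∈ Submodule.span ℝ (rootPathVecs G r) := by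
  by_cases hvr : v = r
  · rw [hvr, pathVec_self]
    exact zero_mem _
  · exact Submodule.subset_span ⟨v, ⟨hvr, hv⟩, rfl⟩

def leafEdgeSum [Fintype V] (G : SimpleGraph V) : (Sym2 V → ℝ) →ₗ[ℝ] ℝ :=
  ∑ ℓ : {ℓ // IsLeaf G ℓ}, LinearMap.proj s(ℓ.1, ℓ.2.exists.choose)

end Graph

namespace SimpleGraph.IsTree

open Walk

variable {G : SimpleGraph V}

section Path

variable (hG : G.IsTree)

def path (a b : V) : G.Walk a b := (hG.existsUnique_path a b).choose

lemma isPath_path (a b : V) : (hG.path a b).IsPath :=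
  (hG.existsUnique_path a b).choose_spec.1

lemma eq_path {a b : V} {p : G.Walk a b} (hp : p.IsPath) : p = hG.path a b :=
  (hG.existsUnique_path a b).choose_spec.2 p hp

lemma path_self (a : V) : hG.path a a = nil := (hG.eq_path IsPath.nil).symm

lemma path_reverse (a b : V) : (hG.path a b).reverse = hG.path b a :=
  hG.eq_path (hG.isPath_path a b).reverse

lemma length_path_comm (a b : V) : (hG.path a b).length = (hG.path b a).length := by
  rw [← hG.path_reverse, length_reverse]

lemma mem_support_path_comm {a b x : V} (hx : x ∈ (hG.path a b).support) :
    x ∈ (hG.path b a).support := by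
  rwa [← hG.path_reverse, support_reverse, List.mem_reverse]

lemma mem_edges_path_comm {a b : V} {e : Sym2 V} (he : e ∈ (hG.path a b).edges) :
    e ∈ (hG.path b a).edges := by
  rwa [← hG.path_reverse, edges_reverse, List.mem_reverse]

lemma path_append_path {a b x : V} (hx : x ∈ (hG.path a b).support) :
    (hG.path a x).append (hG.path x b) = hG.path a b := by
  obtain ⟨p, q, hp, hq, hpq⟩ := (hG.isPath_path a b).mem_support_iff_exists_append.1 hx
  rw [hpq, ← hG.eq_path hp, ← hG.eq_path hq]

lemma support_path_subset {a b x : V} (hx : x ∈ (hG.path a b).support) :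
    (hG.path a x).support ⊆ (hG.path a b).support := by
  rw [← hG.path_append_path hx, support_append]
  exact List.subset_append_left _ _

/-- The neighbour of `a` on the path from `a` to `b` (or `a` itself when `b = a`). -/
def toward (a b : V) : V := (hG.path a b).snd

lemma adj_toward {a b : V} (h : a ≠ b) : G.Adj a (hG.toward a b) :=
  (hG.path a b).adj_snd (not_nil_of_ne h)

lemma toward_mem_support (a b : V) : hG.toward a b ∈ (hG.path a b).support := by
  by_cases h : a = b
  · subst h
    simp [toward, path_self]
  · exact List.mem_of_mem_tail (snd_mem_tail_support (not_nil_of_ne h))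

lemma mk_toward_mem_edges {a b : V} (h : a ≠ b) : s(a, hG.toward a b) ∈ (hG.path a b).edges :=
  mk_start_snd_mem_edges (not_nil_of_ne h)

lemma eq_toward_of_adj {a b y : V} (hy : G.Adj a y) (hyp : y ∈ (hG.path a b).support) :
    y = hG.toward a b :=
  hG.isAcyclic.eq_snd_of_adj_start (hG.isPath_path a b) hy hyp

lemma toward_of_adj {a b : V} (h : G.Adj a b) : hG.toward a b = b :=
  (hG.eq_toward_of_adj h (end_mem_support _)).symm

lemma toward_eq_of_mem_support {a b x : V} (hx : x ∈ (hG.path a b).support) (hax : a ≠ x) :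
    hG.toward a b = hG.toward a x :=
  (hG.eq_toward_of_adj (hG.adj_toward hax)
    (hG.support_path_subset hx (hG.toward_mem_support a x))).symm

lemma toward_ne_of_mem_support {a b x : V} (hx : x ∈ (hG.path a b).support) (hbx : b ≠ x) :
    hG.toward x a ≠ hG.toward x b := by
  have hp : ((hG.path a x).append (hG.path x b)).IsPath := by
    rw [hG.path_append_path hx]; exact hG.isPath_path a b
  exact hp.ne_of_mem_support_of_append (hG.adj_toward hbx.symm).ne'
    (hG.mem_support_path_comm (hG.toward_mem_support x a)) (hG.toward_mem_support x b)

lemma mem_support_of_toward_ne {a b x : V} (h : hG.toward x a ≠ hG.toward x b) :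
    x ∈ (hG.path a b).support := by
  have hp : ((hG.path a x).append (hG.path x b)).IsPath := by
    rw [isPath_def, support_append, List.nodup_append]
    refine ⟨(hG.isPath_path a x).support_nodup,
      (hG.isPath_path x b).support_nodup.sublist (List.tail_sublist _), ?_⟩
    rintro w hwa _ hwb rfl
    have hxw : x ≠ w := by
      rintro rfl
      have := (hG.isPath_path x b).support_nodup
      rw [← cons_tail_support] at this
      exact (List.nodup_cons.1 this).1 hwb
    exact h ((hG.toward_eq_of_mem_support (hG.mem_support_path_comm hwa) hxw).trans
      (hG.toward_eq_of_mem_support (List.mem_of_mem_tail hwb) hxw).symm)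
  rw [← hG.eq_path hp, mem_support_append_iff]
  exact Or.inl (end_mem_support _)

lemma length_path_lt {a b x : V} (hx : x ∈ (hG.path a b).support) (hax : a ≠ x) :
    (hG.path x b).length < (hG.path a b).length := by
  rw [← hG.path_append_path hx, length_append]
  have := not_nil_iff_lt_length.1 (not_nil_of_ne (p := hG.path a x) hax)
  omega

lemma exists_isLeaf_toward [Finite V] {x y : V} (h : G.Adj x y) :
    ∃ a, IsLeaf G a ∧ a ≠ x ∧ hG.toward x a = y := by
  obtain ⟨a, ⟨hax, hxa⟩, hmax⟩ := Set.exists_max_image {a | a ≠ x ∧ hG.toward x a = y}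
    (fun a => (hG.path x a).length) (Set.toFinite _) ⟨y, h.ne', hG.toward_of_adj h⟩
  refine ⟨a, ⟨hG.toward a x, hG.adj_toward hax, fun b hb => ?_⟩, hax, hxa⟩
  by_contra hne
  -- a second neighbour `b` of `a` would lie beyond `a`, farther from `x` in the same direction
  have hab : a ∈ (hG.path b x).support :=
    hG.mem_support_path_comm (hG.mem_support_of_toward_ne (by rwa [hG.toward_of_adj hb, ne_comm]))
  have hbx : b ≠ x := by
    rintro rfl
    exact hne (hG.toward_of_adj hb).symm
  have hlt := hG.length_path_lt hab hb.ne'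
  rw [hG.length_path_comm, hG.length_path_comm b] at hlt
  have hxb : hG.toward x b = y :=
    (hG.toward_eq_of_mem_support (hG.mem_support_path_comm hab) hax.symm).trans hxa
  exact (hmax b ⟨hbx, hxb⟩).not_gt hlt

lemma mem_support_path_of_forall_length_le {a b r m : V} (hm : m ∈ (hG.path a b).support)
    (hmin : ∀ w ∈ (hG.path a b).support, (hG.path m r).length ≤ (hG.path w r).length) :
    m ∈ (hG.path a r).support := by
  by_cases hmr : m = r
  · subst hmr
    exact end_mem_support _
  refine hG.mem_support_of_toward_ne fun h => ?_
  have hma : hG.toward m a ∈ (hG.path a b).support :=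
    hG.support_path_subset hm (hG.mem_support_path_comm (hG.toward_mem_support m a))
  have hlt := hG.length_path_lt (hG.toward_mem_support m r) (hG.adj_toward hmr).ne
  exact (hmin _ hma).not_gt (h ▸ hlt)

lemma exists_median (a b r : V) : ∃ m ∈ (hG.path a b).support,
    m ∈ (hG.path a r).support ∧ m ∈ (hG.path b r).support := by
  obtain ⟨m, hm, hmin⟩ := (hG.path a b).support.toFinset.exists_min_image
    (fun w => (hG.path w r).length) ⟨a, List.mem_toFinset.2 (start_mem_support _)⟩
  simp only [List.mem_toFinset] at hm hmin
  refine ⟨m, hm, hG.mem_support_path_of_forall_length_le hm hmin,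
    hG.mem_support_path_of_forall_length_le (hG.mem_support_path_comm hm) fun w hw => ?_⟩
  exact hmin w (hG.mem_support_path_comm hw)

lemma pathVec_apply (a b : V) (e : Sym2 V) :
    pathVec G a b e = if e ∈ (hG.path a b).edges then 1 else 0 := by
  have : onPath G a b e ↔ e ∈ (hG.path a b).edges :=
    ⟨fun ⟨p, hp, he⟩ => hG.eq_path hp ▸ he, fun he => ⟨_, hG.isPath_path a b, he⟩⟩
  simp only [pathVec, this]

lemma pathVec_add_pathVec {a b x : V} (hx : x ∈ (hG.path a b).support) :
    pathVec G a x + pathVec G x b = pathVec G a b := by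
  have hnodup := (hG.isPath_path a b).isTrail.edges_nodup
  rw [← hG.path_append_path hx, edges_append] at hnodup
  ext e
  simp only [Pi.add_apply, hG.pathVec_apply, ← hG.path_append_path hx, edges_append,
    List.mem_append]
  have := (List.nodup_append.1 hnodup).2.2 e
  split_ifs <;> grind

end Path

lemma pathVec_mem_span_leafPathVecs_of_ncard_ne_two [Finite V] (hG : G.IsTree) {r v : V}
    (hr : IsLeaf G r) (hv : (G.neighborSet v).ncard ≠ 2) :
    pathVec G v r ∈ Submodule.span ℝ (leafPathVecs G) := by
  by_cases hvl : IsLeaf G v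
  · exact pathVec_mem_span_leafPathVecs hvl hr
  have hvr : v ≠ r := by
    rintro rfl
    exact hvl hr
  obtain ⟨y₁, y₂, hy₁, hy₂, hy₁₂, hy₁r, hy₂r⟩ := exists_adj_ne_of_ncard_neighborSet
    (hG.adj_toward hvr) (mt isLeaf_iff_ncard_neighborSet.2 hvl) hv
  obtain ⟨a₁, ha₁, -, hva₁⟩ := hG.exists_isLeaf_toward hy₁
  obtain ⟨a₂, ha₂, -, hva₂⟩ := hG.exists_isLeaf_toward hy₂
  have h₁ : v ∈ (hG.path a₁ r).support := hG.mem_support_of_toward_ne (by rwa [hva₁])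
  have h₂ : v ∈ (hG.path a₂ r).support := hG.mem_support_of_toward_ne (by rwa [hva₂])
  have h₁₂ : v ∈ (hG.path a₁ a₂).support := hG.mem_support_of_toward_ne (by rwa [hva₁, hva₂])
  have hsum : (2 : ℝ) • pathVec G v r =
      pathVec G a₁ r + pathVec G a₂ r - pathVec G a₁ a₂ := by
    rw [← hG.pathVec_add_pathVec h₁, ← hG.pathVec_add_pathVec h₂,
      ← hG.pathVec_add_pathVec h₁₂, pathVec_comm a₂ v]
    module
  rw [← Submodule.smul_mem_iff _ (two_ne_zero (α := ℝ)), hsum]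
  exact sub_mem (add_mem (pathVec_mem_span_leafPathVecs ha₁ hr)
    (pathVec_mem_span_leafPathVecs ha₂ hr)) (pathVec_mem_span_leafPathVecs ha₁ ha₂)

lemma pathVec_mem_span_rootPathVecs [Finite V] (hG : G.IsTree) {i j : V} (r : V)
    (hi : IsLeaf G i) (hj : IsLeaf G j) : pathVec G i j ∈ Submodule.span ℝ (rootPathVecs G r) := by
  obtain ⟨m, hmij, hmi, hmj⟩ := hG.exists_median i j r
  have hleaf {v : V} (hv : IsLeaf G v) : (G.neighborSet v).ncard ≠ 2 := by
    rw [isLeaf_iff_ncard_neighborSet.1 hv]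
    decide
  have hm : pathVec G m r ∈ Submodule.span ℝ (rootPathVecs G r) := by
    by_cases hmr : m = r
    · rw [hmr, pathVec_self]
      exact zero_mem _
    refine pathVec_mem_span_rootPathVecs_of_ncard_ne_two r ?_
    by_cases him : i = m
    · exact him ▸ hleaf hi
    by_cases hjm : j = m
    · exact hjm ▸ hleaf hj
    have := three_le_ncard_neighborSet (hG.adj_toward (Ne.symm him))
      (hG.adj_toward (Ne.symm hjm)) (hG.adj_toward hmr) (hG.toward_ne_of_mem_support hmij hjm)
      (hG.toward_ne_of_mem_support hmi (Ne.symm hmr))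
      (hG.toward_ne_of_mem_support hmj (Ne.symm hmr))
    omega
  have hsum : pathVec G i j = pathVec G i r + pathVec G j r - (2 : ℝ) • pathVec G m r := by
    rw [← hG.pathVec_add_pathVec hmij, ← hG.pathVec_add_pathVec hmi,
      ← hG.pathVec_add_pathVec hmj, pathVec_comm m j]
    module
  rw [hsum]
  exact sub_mem (add_mem (pathVec_mem_span_rootPathVecs_of_ncard_ne_two r (hleaf hi))
    (pathVec_mem_span_rootPathVecs_of_ncard_ne_two r (hleaf hj)))
    (Submodule.smul_mem _ _ hm)

lemma span_leafPathVecs_eq [Finite V] (hG : G.IsTree) {r : V} (hr : IsLeaf G r) :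
    Submodule.span ℝ (leafPathVecs G) = Submodule.span ℝ (rootPathVecs G r) := by
  apply le_antisymm
  · rw [Submodule.span_le]
    rintro _ ⟨i, j, -, hi, hj, rfl⟩
    exact hG.pathVec_mem_span_rootPathVecs r hi hj
  · rw [Submodule.span_le]
    rintro _ ⟨v, ⟨-, hv⟩, rfl⟩
    exact hG.pathVec_mem_span_leafPathVecs_of_ncard_ne_two hr hv

lemma linearIndepOn_pathVec (hG : G.IsTree) (r : V) :
    LinearIndepOn ℝ (pathVec G · r) {v | v ≠ r} := by
  rw [linearIndepOn_iff']
  intro t g hts hsum i hi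
  by_contra hgi
  -- the coefficient of a vertex farthest from `r` is read off at its edge towards `r`
  obtain ⟨v, hv, hmax⟩ := (t.filter (g · ≠ 0)).exists_max_image
    (fun v => (hG.path v r).length) ⟨i, Finset.mem_filter.2 ⟨hi, hgi⟩⟩
  rw [Finset.mem_filter] at hv
  have hvr : v ≠ r := hts hv.1
  have hcoeff := congrFun hsum s(v, hG.toward v r)
  rw [Finset.sum_apply, Finset.sum_eq_single v] at hcoeff
  · simp [hG.pathVec_apply, hG.mk_toward_mem_edges hvr] at hcoeff
    exact hv.2 hcoeff
  · intro w hw hwv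
    by_cases hgw : g w = 0
    · simp [hgw]
    rw [Pi.smul_apply, hG.pathVec_apply, if_neg, smul_zero]
    intro he
    have hlt := hG.length_path_lt (fst_mem_support_of_mem_edges _ he) hwv
    exact (hmax w (Finset.mem_filter.2 ⟨hw, hgw⟩)).not_gt hlt
  · intro hvt
    exact absurd hv.1 hvt

lemma finrank_span_leafPathVecs [Fintype V] (hG : G.IsTree) {r : V} (hr : IsLeaf G r) :
    Module.finrank ℝ (Submodule.span ℝ (leafPathVecs G)) =
      {v | v ≠ r ∧ (G.neighborSet v).ncard ≠ 2}.ncard := by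
  have hli := (hG.linearIndepOn_pathVec r).mono
    (t := {v | v ≠ r ∧ (G.neighborSet v).ncard ≠ 2}) fun _ hv => hv.1
  rw [hG.span_leafPathVecs_eq hr, rootPathVecs, Set.image_eq_range, finrank_span_eq_card hli,
    ← Nat.card_eq_fintype_card, Nat.card_coe_set_eq]

lemma mk_mem_edges_path_iff_of_isLeaf (hG : G.IsTree) {i j ℓ w : V} (hij : i ≠ j)
    (hℓ : IsLeaf G ℓ) (hw : G.Adj ℓ w) : s(ℓ, w) ∈ (hG.path i j).edges ↔ ℓ = i ∨ ℓ = j := by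
  constructor
  · intro he
    by_contra! h
    exact hG.toward_ne_of_mem_support (fst_mem_support_of_mem_edges _ he) (Ne.symm h.2)
      (hℓ.unique (hG.adj_toward h.1) (hG.adj_toward h.2))
  · rintro (rfl | rfl)
    · rw [hℓ.unique hw (hG.adj_toward hij)]
      exact hG.mk_toward_mem_edges hij
    · rw [hℓ.unique hw (hG.adj_toward hij.symm)]
      exact hG.mem_edges_path_comm (hG.mk_toward_mem_edges hij.symm)

lemma leafEdgeSum_pathVec [Fintype V] (hG : G.IsTree) {i j : V} (hij : i ≠ j)
    (hi : IsLeaf G i) (hj : IsLeaf G j) :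
    leafEdgeSum G (pathVec G i j) = 2 := by
  have hfilter : Finset.univ.filter (fun ℓ : {ℓ // IsLeaf G ℓ} => ℓ.1 = i ∨ ℓ.1 = j) =
      {⟨i, hi⟩, ⟨j, hj⟩} := by
    ext ℓ
    simp [Subtype.ext_iff]
  rw [leafEdgeSum, LinearMap.sum_apply]
  calc ∑ ℓ : {ℓ // IsLeaf G ℓ}, LinearMap.proj s(ℓ.1, ℓ.2.exists.choose) (pathVec G i j)
      = ∑ ℓ : {ℓ // IsLeaf G ℓ}, if ℓ.1 = i ∨ ℓ.1 = j then (1 : ℝ) else 0 := by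
        refine Finset.sum_congr rfl fun ℓ _ => ?_
        simp only [LinearMap.proj_apply, hG.pathVec_apply,
          hG.mk_mem_edges_path_iff_of_isLeaf hij ℓ.2 ℓ.2.exists.choose_spec]
    _ = 2 := by
        rw [Finset.sum_boole, hfilter, Finset.card_pair (by simpa [Subtype.ext_iff] using hij)]
        norm_num

lemma ncard_add_ncard_eq_ncard_edgeSet [Fintype V] (hG : G.IsTree) {r : V} (hr : IsLeaf G r) :
    {v | v ≠ r ∧ (G.neighborSet v).ncard ≠ 2}.ncard + {u | (G.neighborSet u).ncard = 2}.ncard =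
      G.edgeSet.ncard := by
  have hsplit : {v | v ≠ r ∧ (G.neighborSet v).ncard ≠ 2} =
      {r}ᶜ \ {u | (G.neighborSet u).ncard = 2} := by
    ext v
    simp
  have hsub : {u | (G.neighborSet u).ncard = 2} ⊆ {r}ᶜ := by
    intro u hu hur
    rw [Set.mem_singleton_iff.1 hur, Set.mem_ofPred_eq, isLeaf_iff_ncard_neighborSet.1 hr] at hu
    omega
  have hvert : G.edgeSet.ncard + 1 = Nat.card V := by
    rw [← coe_edgeFinset, Set.ncard_coe_finset, hG.card_edgeFinset, Nat.card_eq_fintype_card]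
  have hcompl := Set.ncard_add_ncard_compl {r}
  rw [Set.ncard_singleton] at hcompl
  rw [← Set.ncard_sdiff_add_ncard_of_subset hsub (Set.toFinite _), ← hsplit] at hcompl
  omega

end SimpleGraph.IsTree

/-- For a tree with more than 2 vertices,
`dim P_T = |E| − |{u : deg(u) = 2}| − 1`. -/
theorem pathPolytope_dim [Fintype V] (G : SimpleGraph V)
    (hG : G.IsTree) (hcard : 2 < Fintype.card V) :
    polyDim (pathPolytope G) + Set.ncard {u : V | (G.neighborSet u).ncard = 2} + 1
      = G.edgeSet.ncard := by
  obtain ⟨v, w, hvw⟩ := Fintype.exists_pair_of_one_lt_card (by omega : 1 < Fintype.card V)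
  obtain ⟨r, hr, -, -⟩ := hG.exists_isLeaf_toward (hG.adj_toward hvw)
  obtain ⟨y, hry⟩ := hr.exists
  obtain ⟨a, ha, har, -⟩ := hG.exists_isLeaf_toward hry
  have hx : pathVec G a r ∈ leafPathVecs G := ⟨a, r, har, ha, hr, rfl⟩
  have hvert : ∀ x ∈ leafPathVecs G, leafEdgeSum G x = leafEdgeSum G (pathVec G a r) := by
    rintro _ ⟨i, j, hij, hi, hj, rfl⟩
    rw [hG.leafEdgeSum_pathVec hij hi hj, hG.leafEdgeSum_pathVec har ha hr]
  have hdim :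
      polyDim (pathPolytope G) + 1 = Module.finrank ℝ (Submodule.span ℝ (leafPathVecs G)) := by
    rw [finrank_span_eq_finrank_vectorSpan_add_one hx (leafEdgeSum G) hvert
      (by rw [hG.leafEdgeSum_pathVec har ha hr]; norm_num), polyDim, pathPolytope,
      affineSpan_convexHull, direction_affineSpan]
    rfl
  have := hG.ncard_add_ncard_eq_ncard_edgeSet hr
  rw [hG.finrank_span_leafPathVecs hr] at hdim
  omega
end
end

section
/- Let T' be a tree, e_1 a leaf edge of T', and let S_2 be the path with 2 edges (star tree with internal vertex of degree 2), with e_2 one of its edges. If T = T' *_{e_1,e_2} S_2 (i.e., T is obtained from T' by subdividing the edge e_1 into two edges), then P_T is affinely isomorphic to P_{T'}. -/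
/-!
Each edge of the subdivision comes from an edge of `T'` (both halves of `e₁` from `e₁`), so
pulling coordinates back along this edge map is an injective linear map. Lifting the path of
`T'` between two leaves, by replacing `e₁` with its two halves, gives a path of the subdivision,
which is a tree; by uniqueness of paths it is the path between the same leaves there, so the
pullback sends each vertex `c^{i↔j}` of `P_{T'}` to the vertex `c^{i↔j}` of `P_T`. The leaves of
both trees are the same, and linear maps commute with convex hulls.
-/

open Classical SimpleGraph

noncomputable section

variable {V : Type*}

/-- The tree obtained from `G'` by subdividing the edge `{u,k}`: a new vertex `none` is
placed in the middle of the edge, which is replaced by the two edges `{u,none}`, `{none,k}`. -/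
def subdiv (G' : SimpleGraph V) (u k : V) : SimpleGraph (Option V) where
  Adj a b := match a, b with
    | some x, some y => G'.Adj x y ∧ ¬(x = u ∧ y = k) ∧ ¬(x = k ∧ y = u)
    | some x, none => x = u ∨ x = k
    | none, some y => y = u ∨ y = k
    | none, none => False
  symm := by
    refine ⟨?_⟩
    rintro (x | x) (y | y) h
    · exact h
    · exact h
    · exact h
    · exact ⟨h.1.symm, fun hc => h.2.2 ⟨hc.2, hc.1⟩, fun hc => h.2.1 ⟨hc.2, hc.1⟩⟩
  loopless := by
    refine ⟨?_⟩
    rintro (x | x) h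
    · exact h
    · exact G'.irrefl h.1

namespace SimpleGraph

variable {W : Type*} {G : SimpleGraph V}

/-- A left inverse of `f` maps `G.map f` minus `s(f a, f b)` into `G` minus `s(a, b)`, so bridges
of `G` give bridges of `G.map f`. -/
lemma IsAcyclic.map (f : V ↪ W) (hG : G.IsAcyclic) : (G.map f).IsAcyclic := by
  rw [isAcyclic_iff_forall_adj_isBridge]
  intro v w hvw
  obtain ⟨a, b, hab, rfl, rfl⟩ := (map_adj f G v w).1 hvw
  have : Nonempty V := ⟨a⟩
  have hinv : ∀ x, Function.invFun f (f x) = x := Function.leftInverse_invFun f.injective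
  let g : (G.map f).deleteEdges {s(f a, f b)} →g G.deleteEdges {s(a, b)} :=
    { toFun := Function.invFun f
      map_rel' := by
        intro _ _ h
        obtain ⟨hadj, hne⟩ := deleteEdges_adj.1 h
        obtain ⟨x, y, hxy, rfl, rfl⟩ := (map_adj f G _ _).1 hadj
        refine deleteEdges_adj.2 ⟨by rwa [hinv, hinv], fun hxy' => hne ?_⟩
        rw [hinv, hinv, Set.mem_singleton_iff] at hxy'
        rw [← Sym2.map_mk f, ← Sym2.map_mk f, hxy', Set.mem_singleton_iff] }
  exact fun hreach =>
    isAcyclic_iff_forall_adj_isBridge.1 hG hab (by simpa [g, hinv] using hreach.map g)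

end SimpleGraph

lemma onPath_iff_mem_edges {G : SimpleGraph V} (hG : G.IsAcyclic) {i j : V} {p : G.Walk i j}
    (hp : p.IsPath) (e : Sym2 V) : onPath G i j e ↔ e ∈ p.edges := by
  refine ⟨fun ⟨q, hq, he⟩ => ?_, fun he => ⟨p, hp, he⟩⟩
  have hqp : q = p := congrArg Subtype.val ((hG.subsingleton_path i j).elim ⟨q, hq⟩ ⟨p, hp⟩)
  rwa [← hqp]

lemma existsUnique_iff_of_injective {α β : Type*} {f : α → β} (hf : f.Injective)
    {p : α → Prop} {q : β → Prop} (hq : ∀ b, q b ↔ ∃ a, p a ∧ f a = b) :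
    (∃! b, q b) ↔ ∃! a, p a := by
  constructor
  · rintro ⟨b, hb, huniq⟩
    obtain ⟨a, ha, rfl⟩ := (hq b).1 hb
    exact ⟨a, ha, fun a' ha' => hf (huniq _ ((hq _).2 ⟨a', ha', rfl⟩))⟩
  · rintro ⟨a, ha, huniq⟩
    refine ⟨f a, (hq _).2 ⟨a, ha, rfl⟩, fun b hb => ?_⟩
    obtain ⟨a', ha', rfl⟩ := (hq b).1 hb
    rw [huniq a' ha']

lemma AffineMap.image_pathPolytope {W : Type*} {G : SimpleGraph V} {H : SimpleGraph W}
    (φ : (Sym2 V → ℝ) →ᵃ[ℝ] (Sym2 W → ℝ)) {g : V → W} (hg : g.Injective)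
    (hleaf : ∀ w, IsLeaf H w ↔ ∃ v, IsLeaf G v ∧ g v = w)
    (hφ : ∀ i j, φ (pathVec G i j) = pathVec H (g i) (g j)) :
    φ '' pathPolytope G = pathPolytope H := by
  rw [pathPolytope, pathPolytope, φ.image_convexHull]
  congr 1
  ext y
  constructor
  · rintro ⟨_, ⟨i, j, hij, hi, hj, rfl⟩, rfl⟩
    exact ⟨g i, g j, hg.ne hij, (hleaf _).2 ⟨i, hi, rfl⟩, (hleaf _).2 ⟨j, hj, rfl⟩,
      hφ i j⟩
  · rintro ⟨_, _, hij, hi', hj', rfl⟩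
    obtain ⟨i, hi, rfl⟩ := (hleaf _).1 hi'
    obtain ⟨j, hj, rfl⟩ := (hleaf _).1 hj'
    exact ⟨_, ⟨i, j, fun h => hij (h ▸ rfl), hi, hj, rfl⟩, hφ i j⟩

namespace subdiv

variable {G' : SimpleGraph V} {u k : V}

lemma adj_some_some {x y : V} :
    (subdiv G' u k).Adj (some x) (some y) ↔ G'.Adj x y ∧ s(x, y) ≠ s(u, k) := by
  simp [subdiv]

lemma adj_some_none {x : V} : (subdiv G' u k).Adj (some x) none ↔ x ∈ s(u, k) :=
  Sym2.mem_iff.symm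

lemma adj_none_some {x : V} : (subdiv G' u k).Adj none (some x) ↔ x ∈ s(u, k) :=
  Sym2.mem_iff.symm

lemma not_adj_none_none : ¬ (subdiv G' u k).Adj none none := id

/-- Renames `k` to `none`. As `k` is a leaf, `G'.map (relabel k)` is the subdivision minus its
pendant edge `s(none, some k)`, which exhibits the subdivision as a tree plus a new leaf. -/
def relabel (k : V) : V ↪ Option V :=
  Function.Embedding.some.trans (Equiv.swap none (some k)).toEmbedding

lemma relabel_apply_self : relabel k k = none := by
  simp [relabel]

lemma relabel_apply_of_ne {x : V} (hx : x ≠ k) : relabel k x = some x := by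
  simp [relabel, Equiv.swap_apply_of_ne_of_ne, hx]

lemma le_map_relabel_sup_edge (hk : IsLeaf G' k) (huk : G'.Adj u k) :
    subdiv G' u k ≤ G'.map (relabel k) ⊔ edge none (some k) := by
  have ne_k : ∀ {x y}, G'.Adj x y → s(x, y) ≠ s(u, k) → x ≠ k := by
    rintro x y hxy hne rfl
    exact hne (by rw [hk.unique hxy huk.symm, Sym2.eq_swap])
  have h_u : (G'.map (relabel k)).Adj (some u) none :=
    (map_adj _ _ _ _).2 ⟨u, k, huk, relabel_apply_of_ne huk.ne, relabel_apply_self⟩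
  rintro (x | x) (y | y) h
  · exact (not_adj_none_none h).elim
  · rcases Sym2.mem_iff.1 (adj_none_some.1 h) with rfl | rfl
    · exact Or.inl h_u.symm
    · exact Or.inr (by simp [edge_adj])
  · rcases Sym2.mem_iff.1 (adj_some_none.1 h) with rfl | rfl
    · exact Or.inl h_u
    · exact Or.inr (by simp [edge_adj])
  · obtain ⟨hxy, hne⟩ := adj_some_some.1 h
    have hne' : s(y, x) ≠ s(u, k) := by rwa [Sym2.eq_swap]
    exact Or.inl ((map_adj _ _ _ _).2 ⟨x, y, hxy, relabel_apply_of_ne (ne_k hxy hne),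
      relabel_apply_of_ne (ne_k hxy.symm hne')⟩)

lemma map_relabel_not_reachable :
    ¬ (G'.map (relabel k)).Reachable none (some k) := by
  rintro ⟨p⟩
  cases p.reverse with
  | cons h _ =>
    obtain ⟨x, y, -, hx, -⟩ := (map_adj _ _ _ _).1 h
    by_cases hxk : x = k
    · simp [hxk, relabel_apply_self] at hx
    · simp [relabel_apply_of_ne hxk, hxk] at hx

lemma isAcyclic (hG' : G'.IsAcyclic) (hk : IsLeaf G' k) (huk : G'.Adj u k) :
    (subdiv G' u k).IsAcyclic :=
  ((hG'.map _).sup_edge_of_not_reachable map_relabel_not_reachable).anti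
    (le_map_relabel_sup_edge hk huk)

def liftWalk : ∀ {a b : V}, G'.Walk a b → (subdiv G' u k).Walk (some a) (some b)
  | _, _, .nil => .nil
  | _, _, .cons (u := x) (v := y) h p =>
    if hxy : s(x, y) = s(u, k) then
      .cons (adj_some_none.2 (hxy ▸ Sym2.mem_mk_left x y))
        (.cons (adj_none_some.2 (hxy ▸ Sym2.mem_mk_right x y)) (liftWalk p))
    else .cons (adj_some_some.2 ⟨h, hxy⟩) (liftWalk p)

section liftWalk

variable {x y b : V} (h : G'.Adj x y) (p : G'.Walk y b)

lemma liftWalk_cons_of_eq (hxy : s(x, y) = s(u, k)) :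
    liftWalk (.cons h p) = .cons (adj_some_none.2 (hxy ▸ Sym2.mem_mk_left x y))
      (.cons (adj_none_some.2 (hxy ▸ Sym2.mem_mk_right x y)) (liftWalk p)) := by
  rw [liftWalk, dif_pos hxy]

lemma liftWalk_cons_of_ne (hxy : s(x, y) ≠ s(u, k)) :
    liftWalk (.cons h p) = .cons (adj_some_some.2 ⟨h, hxy⟩) (liftWalk p) := by
  rw [liftWalk, dif_neg hxy]

end liftWalk

lemma some_mem_support_liftWalk_iff {a b : V} (p : G'.Walk a b) (z : V) :
    some z ∈ (liftWalk (u := u) (k := k) p).support ↔ z ∈ p.support := by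
  induction p with
  | nil => simp [liftWalk]
  | @cons x y b h p ih =>
    by_cases hxy : s(x, y) = s(u, k)
    · simp [liftWalk_cons_of_eq h p hxy, ih]
    · simp [liftWalk_cons_of_ne h p hxy, ih]

lemma none_mem_support_liftWalk_iff {a b : V} (p : G'.Walk a b) :
    none ∈ (liftWalk (u := u) (k := k) p).support ↔ s(u, k) ∈ p.edges := by
  induction p with
  | nil => simp [liftWalk]
  | @cons x y b h p ih =>
    by_cases hxy : s(x, y) = s(u, k)
    · simp [liftWalk_cons_of_eq h p hxy, hxy]
    · simp [liftWalk_cons_of_ne h p hxy, ih, Ne.symm hxy]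

lemma isPath_liftWalk {a b : V} {p : G'.Walk a b} (hp : p.IsPath) :
    (liftWalk (u := u) (k := k) p).IsPath := by
  induction p with
  | nil => exact .nil
  | @cons x y b h p ih =>
    rw [Walk.cons_isPath_iff] at hp
    have hx : some x ∉ (liftWalk (u := u) (k := k) p).support :=
      (some_mem_support_liftWalk_iff p x).not.2 hp.2
    by_cases hxy : s(x, y) = s(u, k)
    · have hnone : s(u, k) ∉ p.edges := fun hmem =>
        hp.2 (Walk.fst_mem_support_of_mem_edges p (hxy ▸ hmem))
      rw [liftWalk_cons_of_eq h p hxy, Walk.cons_isPath_iff, Walk.cons_isPath_iff,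
        none_mem_support_liftWalk_iff]
      exact ⟨⟨ih hp.1, hnone⟩, by simpa using hx⟩
    · rw [liftWalk_cons_of_ne h p hxy, Walk.cons_isPath_iff]
      exact ⟨ih hp.1, hx⟩

/-- The edge of `G'` that an edge of the subdivision comes from. Pairs that are not edges of the
subdivision go to the diagonal `s(k, k)`, which lies on no path. -/
def parentEdge (u k : V) : Sym2 (Option V) → Sym2 V :=
  Sym2.lift ⟨fun a b => match a, b with
    | some x, some y => if s(x, y) = s(u, k) then s(k, k) else s(x, y)
    | some x, none | none, some x => if x ∈ s(u, k) then s(u, k) else s(k, k)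
    | none, none => s(k, k), by rintro (_ | _) (_ | _) <;> simp [Sym2.eq_swap]⟩

@[simp] lemma parentEdge_some_some (x y : V) :
    parentEdge u k s(some x, some y) = if s(x, y) = s(u, k) then s(k, k) else s(x, y) := rfl

@[simp] lemma parentEdge_some_none (x : V) :
    parentEdge u k s(some x, none) = if x ∈ s(u, k) then s(u, k) else s(k, k) := rfl

@[simp] lemma parentEdge_none_some (x : V) :
    parentEdge u k s(none, some x) = if x ∈ s(u, k) then s(u, k) else s(k, k) := rfl

@[simp] lemma parentEdge_none_none : parentEdge u k s(none, none) = s(k, k) := rfl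

lemma parentEdge_surjective : Function.Surjective (parentEdge u k) := by
  rintro ⟨a, b⟩
  by_cases hab : s(a, b) = s(u, k)
  · exact ⟨s(some u, none), by simp [hab]⟩
  · exact ⟨s(some a, some b), by simp [hab]⟩

lemma parentEdge_eq_self_iff (hu : u ≠ k) (e : Sym2 (Option V)) :
    parentEdge u k e = s(u, k) ↔ e = s(some u, none) ∨ e = s(some k, none) := by
  induction e using Sym2.ind with
  | _ a b => rcases a with _ | c <;> rcases b with _ | d <;> simp <;> grind

lemma parentEdge_eq_iff_of_ne {x y : V} (hxy : x ≠ y) (hne : s(x, y) ≠ s(u, k))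
    (e : Sym2 (Option V)) : parentEdge u k e = s(x, y) ↔ e = s(some x, some y) := by
  induction e using Sym2.ind with
  | _ a b => rcases a with _ | c <;> rcases b with _ | d <;> simp <;> grind

lemma mem_edges_liftWalk_iff (hu : u ≠ k) {a b : V} (p : G'.Walk a b) (e : Sym2 (Option V)) :
    e ∈ (liftWalk (u := u) (k := k) p).edges ↔ parentEdge u k e ∈ p.edges := by
  induction p with
  | nil => simp [liftWalk]
  | @cons x y b h p ih =>
    by_cases hxy : s(x, y) = s(u, k)
    · have hsplit :
          e = s(some x, none) ∨ e = s(none, some y) ↔ parentEdge u k e = s(x, y) := by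
        rw [hxy, parentEdge_eq_self_iff hu, Sym2.eq_swap (a := none)]
        rcases Sym2.eq_iff.1 hxy with ⟨rfl, rfl⟩ | ⟨rfl, rfl⟩
        · rfl
        · exact or_comm
      simp only [liftWalk_cons_of_eq h p hxy, Walk.edges_cons, List.mem_cons, ih, ← hsplit,
        or_assoc]
    · simp only [liftWalk_cons_of_ne h p hxy, Walk.edges_cons, List.mem_cons, ih,
        parentEdge_eq_iff_of_ne h.ne hxy]

lemma pathVec_some_some (hG' : G'.IsTree) (hk : IsLeaf G' k) (huk : G'.Adj u k) (i j : V) :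
    pathVec (subdiv G' u k) (some i) (some j) = pathVec G' i j ∘ parentEdge u k := by
  obtain ⟨p, hp, -⟩ := hG'.existsUnique_path i j
  funext e
  simp only [pathVec, Function.comp_apply, onPath_iff_mem_edges hG'.isAcyclic hp,
    onPath_iff_mem_edges (isAcyclic hG'.isAcyclic hk huk) (isPath_liftWalk hp),
    mem_edges_liftWalk_iff huk.ne]

def liftNeighbor (u k x y : V) : Option V := if s(x, y) = s(u, k) then none else some y

lemma liftNeighbor_injective (x : V) : Function.Injective (liftNeighbor u k x) := by
  intro y y' h
  unfold liftNeighbor at h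
  split_ifs at h with hy hy'
  · exact Sym2.congr_right.1 (hy.trans hy'.symm)
  · exact Option.some_injective _ h

lemma adj_some_iff (huk : G'.Adj u k) (x : V) (w : Option V) :
    (subdiv G' u k).Adj (some x) w ↔ ∃ y, G'.Adj x y ∧ liftNeighbor u k x y = w := by
  rcases w with _ | z
  · simp only [adj_some_none, Sym2.mem_iff, liftNeighbor, ite_eq_left_iff, reduceCtorEq,
      imp_false, not_not]
    constructor
    · rintro (rfl | rfl)
      · exact ⟨k, huk, rfl⟩
      · exact ⟨u, huk.symm, Sym2.eq_swap⟩
    · rintro ⟨y, -, hxy⟩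
      exact Sym2.mem_iff.1 (hxy ▸ Sym2.mem_mk_left x y)
  · simp [adj_some_some, liftNeighbor]

lemma isLeaf_iff (huk : G'.Adj u k) (w : Option V) :
    IsLeaf (subdiv G' u k) w ↔ ∃ v, IsLeaf G' v ∧ some v = w := by
  rcases w with _ | x
  · refine iff_of_false (fun ⟨w, _, huniq⟩ => huk.ne ?_) (by simp)
    exact Option.some_injective _ ((huniq _ (adj_none_some.2 (Sym2.mem_mk_left u k))).trans
      (huniq _ (adj_none_some.2 (Sym2.mem_mk_right u k))).symm)
  · simp only [Option.some_inj, exists_eq_right]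
    exact existsUnique_iff_of_injective (liftNeighbor_injective x) (adj_some_iff huk x)

end subdiv

theorem pathPolytope_subdivision_general (G' : SimpleGraph V)
    (hG' : G'.IsTree) (u k : V) (hk : IsLeaf G' k) (huk : G'.Adj u k) :
    ∃ φ : (Sym2 V → ℝ) →ᵃ[ℝ] (Sym2 (Option V) → ℝ),
      Function.Injective φ ∧ φ '' pathPolytope G' = pathPolytope (subdiv G' u k) := by
  let φ := LinearMap.funLeft ℝ ℝ (subdiv.parentEdge u k)
  refine ⟨φ.toAffineMap, LinearMap.funLeft_injective_of_surjective ℝ ℝ _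
    subdiv.parentEdge_surjective, ?_⟩
  exact φ.toAffineMap.image_pathPolytope (Option.some_injective V) (subdiv.isLeaf_iff huk)
    fun i j => (subdiv.pathVec_some_some hG' hk huk i j).symm

/-- Subdividing a leaf edge `{u,k}` (i.e. gluing a path with two edges
onto it) yields a tree whose path polytope is affinely isomorphic to the original one. -/
theorem pathPolytope_subdivision [Fintype V] (G' : SimpleGraph V)
    (hG' : G'.IsTree) (u k : V) (hk : IsLeaf G' k) (huk : G'.Adj u k) :
    ∃ φ : (Sym2 V → ℝ) →ᵃ[ℝ] (Sym2 (Option V) → ℝ),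
      Function.Injective φ ∧ φ '' pathPolytope G' = pathPolytope (subdiv G' u k) :=
  pathPolytope_subdivision_general G' hG' u k hk huk
end
end
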